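/- arXiv:1506.06180 — 3 statements merged into one kernel-verified Lean document; each statement's English description precedes it below -/
import Mathlib

section
/- Let constants σ₀ > 0, β₀, μ₀, c₀, λ₀ and ρ ∈ (-1, 1) be given, set b₀ := μ₀ - σ₀²/2, and let V⁽⁰⁾(t, w) be a smooth solution on (-∞, T] × (0, ∞) of ∂_t V⁽⁰⁾ - (1/2) λ₀² (∂_w V⁽⁰⁾)²/(∂_w² V⁽⁰⁾) = 0 with ∂_w V⁽⁰⁾ > 0 and ∂_w² V⁽⁰⁾ < 0, and R := -∂_w V⁽⁰⁾/∂_w² V⁽⁰⁾. Define the change of variable z(t, w) := -log ∂_w V⁽⁰⁾(t, w) + (1/2) λ₀² (T - t). Then for every smooth function q(t, x, y, z), the function V̂(t, x, y, w) := q(t, x, y, z(t, w)) satisfies (∂_t + 𝒜₀ + ℬ₀) V̂ (t,x,y,w) = [(∂_t + 𝒜₀ + 𝒞₀) q](t, x, y, z(t, w)), where 𝒜₀ := (1/2)σ₀² ∂_x² + ρσ₀β₀ ∂_x∂_y + (1/2)β₀² ∂_y² + b₀ ∂_x + c₀ ∂_y, ℬ₀ := (1/2)λ₀² R² ∂_w²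 + λ₀² R ∂_w + ρβ₀λ₀ R ∂_w∂_y + μ₀ R ∂_w∂_x, and 𝒞₀ := (1/2)λ₀² ∂_z² + ρβ₀λ₀ ∂_y∂_z + μ₀ ∂_x∂_z. -/
/-!
Write `P = ∂_w V⁽⁰⁾`, so that `R = -P / ∂_w P` and `∂_w z = -∂_w P / P`, hence `R ∂_w z = 1`.
Since `V̂` depends on `x` and `y` only through `q`, `𝒜₀` passes through the substitution, and the
chain rule (with symmetry of the mixed partials of `q`) gives
`(∂_t + ℬ₀) V̂ = (∂_t + 𝒞₀) q + ∂_z q · (∂_t z + ½ λ₀² R² ∂_w² z + λ₀² R ∂_w z)`.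
Differentiating the HJB equation in `w`, with `∂_t ∂_w = ∂_w ∂_t`, gives
`∂_t P = λ₀² P - ½ λ₀² P² ∂_w² P / (∂_w P)²`, and with it the last factor vanishes.
-/

noncomputable section

/-- Functions of `(t, x, y, w)` (or `(t, x, y, z)`). -/
abbrev R4 := ℝ → ℝ → ℝ → ℝ → ℝ

def d4T (F : R4) : R4 := fun t x y w => deriv (fun s => F s x y w) t
def d4X (F : R4) : R4 := fun t x y w => deriv (fun u => F t u y w) x
def d4Y (F : R4) : R4 := fun t x y w => deriv (fun u => F t x u w) y
def d4W (F : R4) : R4 := fun t x y w => deriv (fun u => F t x y u) w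

/-- Partial derivative in the time variable of `V⁰(t, w)`. -/
def dT2 (f : ℝ → ℝ → ℝ) : ℝ → ℝ → ℝ := fun t w => deriv (fun s => f s w) t

/-- Partial derivative in the wealth variable of `V⁰(t, w)`. -/
def dW2 (f : ℝ → ℝ → ℝ) : ℝ → ℝ → ℝ := fun t w => deriv (fun v => f t v) w

open Set Filter Topology Function
open scoped ContDiff

section Clairaut

variable {E F : Type*} [NormedAddCommGroup E] [NormedSpace ℝ E]
  [NormedAddCommGroup F] [NormedSpace ℝ F] {G : E → F} {U : Set E} {p : E}

theorem ContDiffOn.differentiableAt_of_isOpen (hG : ContDiffOn ℝ ∞ G U) (hU : IsOpen U)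
    (hp : p ∈ U) : DifferentiableAt ℝ G p :=
  (hG.contDiffAt (hU.mem_nhds hp)).differentiableAt (by simp)

theorem ContDiffOn.fderiv_apply_of_isOpen (hG : ContDiffOn ℝ ∞ G U) (hU : IsOpen U) (v : E) :
    ContDiffOn ℝ ∞ (fun p => fderiv ℝ G p v) U :=
  (hG.fderiv_of_isOpen hU ENat.coe_top_add_one.le).clm_apply contDiffOn_const

theorem fderiv_fderiv_apply_comm (hG : ContDiffAt ℝ 2 G p) (v w : E) :
    fderiv ℝ (fun q => fderiv ℝ G q v) p w = fderiv ℝ (fun q => fderiv ℝ G q w) p v := by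
  have hG' : DifferentiableAt ℝ (fderiv ℝ G) p :=
    (hG.fderiv_right one_add_one_eq_two.le).differentiableAt one_ne_zero
  rw [fderiv_clm_apply hG' (differentiableAt_const v),
    fderiv_clm_apply hG' (differentiableAt_const w)]
  simpa using (hG.isSymmSndFDerivAt minSmoothness_of_isRCLikeNormedField.le).eq w v

end Clairaut

section TwoVariables

variable {f : ℝ → ℝ → ℝ} {U : Set (ℝ × ℝ)} {t w : ℝ}

theorem dT2_eq_fderiv (hf : DifferentiableAt ℝ (uncurry f) (t, w)) :
    dT2 f t w = fderiv ℝ (uncurry f) (t, w) (1, 0) := by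
  have := hf.hasFDerivAt.comp_hasDerivAt t ((hasDerivAt_id' t).prodMk (hasDerivAt_const t w))
  exact this.deriv

theorem dW2_eq_fderiv (hf : DifferentiableAt ℝ (uncurry f) (t, w)) :
    dW2 f t w = fderiv ℝ (uncurry f) (t, w) (0, 1) := by
  have := hf.hasFDerivAt.comp_hasDerivAt w ((hasDerivAt_const w t).prodMk (hasDerivAt_id' w))
  exact this.deriv

theorem hasDerivAt_dT2 (hf : DifferentiableAt ℝ (uncurry f) (t, w)) :
    HasDerivAt (fun s => f s w) (dT2 f t w) t := by
  have := hf.comp t ((hasDerivAt_id' t).prodMk (hasDerivAt_const t w)).differentiableAt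
  exact this.hasDerivAt

theorem hasDerivAt_dW2 (hf : DifferentiableAt ℝ (uncurry f) (t, w)) :
    HasDerivAt (f t) (dW2 f t w) w :=
  (hf.comp w ((differentiableAt_const t).prodMk differentiableAt_id)).hasDerivAt

variable (hU : IsOpen U) (hf : ContDiffOn ℝ ∞ (uncurry f) U)
include hU hf

theorem eqOn_uncurry_dT2_fderiv :
    EqOn (uncurry (dT2 f)) (fun p => fderiv ℝ (uncurry f) p (1, 0)) U :=
  fun _ hp => dT2_eq_fderiv (hf.differentiableAt_of_isOpen hU hp)

theorem eqOn_uncurry_dW2_fderiv :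
    EqOn (uncurry (dW2 f)) (fun p => fderiv ℝ (uncurry f) p (0, 1)) U :=
  fun _ hp => dW2_eq_fderiv (hf.differentiableAt_of_isOpen hU hp)

theorem ContDiffOn.uncurry_dT2 : ContDiffOn ℝ ∞ (uncurry (dT2 f)) U :=
  (hf.fderiv_apply_of_isOpen hU _).congr (eqOn_uncurry_dT2_fderiv hU hf)

theorem ContDiffOn.uncurry_dW2 : ContDiffOn ℝ ∞ (uncurry (dW2 f)) U :=
  (hf.fderiv_apply_of_isOpen hU _).congr (eqOn_uncurry_dW2_fderiv hU hf)

theorem dT2_dW2_comm (hp : (t, w) ∈ U) : dT2 (dW2 f) t w = dW2 (dT2 f) t w := by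
  rw [dT2_eq_fderiv ((hf.uncurry_dW2 hU).differentiableAt_of_isOpen hU hp),
    dW2_eq_fderiv ((hf.uncurry_dT2 hU).differentiableAt_of_isOpen hU hp),
    ((eqOn_uncurry_dW2_fderiv hU hf).eventuallyEq_of_mem (hU.mem_nhds hp)).fderiv_eq,
    ((eqOn_uncurry_dT2_fderiv hU hf).eventuallyEq_of_mem (hU.mem_nhds hp)).fderiv_eq]
  exact fderiv_fderiv_apply_comm ((hf.contDiffAt (hU.mem_nhds hp)).of_le (by norm_cast)) _ _

end TwoVariables

section FourVariables

def uncurry4 (F : R4) : ℝ × ℝ × ℝ × ℝ → ℝ := fun p => F p.1 p.2.1 p.2.2.1 p.2.2.2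

variable {F : R4} {t x y w : ℝ}

theorem d4T_eq_fderiv (hF : DifferentiableAt ℝ (uncurry4 F) (t, x, y, w)) :
    d4T F t x y w = fderiv ℝ (uncurry4 F) (t, x, y, w) (1, 0, 0, 0) := by
  have := hF.hasFDerivAt.comp_hasDerivAt t ((hasDerivAt_id' t).prodMk
    ((hasDerivAt_const t x).prodMk ((hasDerivAt_const t y).prodMk (hasDerivAt_const t w))))
  exact this.deriv

theorem d4X_eq_fderiv (hF : DifferentiableAt ℝ (uncurry4 F) (t, x, y, w)) :
    d4X F t x y w = fderiv ℝ (uncurry4 F) (t, x, y, w) (0, 1, 0, 0) := by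
  have := hF.hasFDerivAt.comp_hasDerivAt x ((hasDerivAt_const x t).prodMk
    ((hasDerivAt_id' x).prodMk ((hasDerivAt_const x y).prodMk (hasDerivAt_const x w))))
  exact this.deriv

theorem d4Y_eq_fderiv (hF : DifferentiableAt ℝ (uncurry4 F) (t, x, y, w)) :
    d4Y F t x y w = fderiv ℝ (uncurry4 F) (t, x, y, w) (0, 0, 1, 0) := by
  have := hF.hasFDerivAt.comp_hasDerivAt y ((hasDerivAt_const y t).prodMk
    ((hasDerivAt_const y x).prodMk ((hasDerivAt_id' y).prodMk (hasDerivAt_const y w))))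
  exact this.deriv

theorem d4W_eq_fderiv (hF : DifferentiableAt ℝ (uncurry4 F) (t, x, y, w)) :
    d4W F t x y w = fderiv ℝ (uncurry4 F) (t, x, y, w) (0, 0, 0, 1) := by
  have := hF.hasFDerivAt.comp_hasDerivAt w ((hasDerivAt_const w t).prodMk
    ((hasDerivAt_const w x).prodMk ((hasDerivAt_const w y).prodMk (hasDerivAt_id' w))))
  exact this.deriv

theorem uncurry4_d4X_eq_fderiv (hF : Differentiable ℝ (uncurry4 F)) :
    uncurry4 (d4X F) = fun p => fderiv ℝ (uncurry4 F) p (0, 1, 0, 0) :=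
  funext fun _ => d4X_eq_fderiv (hF _)

theorem uncurry4_d4Y_eq_fderiv (hF : Differentiable ℝ (uncurry4 F)) :
    uncurry4 (d4Y F) = fun p => fderiv ℝ (uncurry4 F) p (0, 0, 1, 0) :=
  funext fun _ => d4Y_eq_fderiv (hF _)

theorem uncurry4_d4W_eq_fderiv (hF : Differentiable ℝ (uncurry4 F)) :
    uncurry4 (d4W F) = fun p => fderiv ℝ (uncurry4 F) p (0, 0, 0, 1) :=
  funext fun _ => d4W_eq_fderiv (hF _)

theorem Differentiable.slice_of_uncurry4 (hF : Differentiable ℝ (uncurry4 F)) (t x y : ℝ) :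
    Differentiable ℝ (F t x y) := fun w =>
  (hF _).comp w ((differentiableAt_const t).prodMk
    ((differentiableAt_const x).prodMk ((differentiableAt_const y).prodMk differentiableAt_id)))

section Smooth

variable (hF : ContDiff ℝ ∞ (uncurry4 F))
include hF

theorem ContDiff.uncurry4_d4X : ContDiff ℝ ∞ (uncurry4 (d4X F)) := by
  rw [uncurry4_d4X_eq_fderiv (hF.differentiable (by simp))]
  exact (hF.fderiv_right ENat.coe_top_add_one.le).clm_apply contDiff_const

theorem ContDiff.uncurry4_d4Y : ContDiff ℝ ∞ (uncurry4 (d4Y F)) := by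
  rw [uncurry4_d4Y_eq_fderiv (hF.differentiable (by simp))]
  exact (hF.fderiv_right ENat.coe_top_add_one.le).clm_apply contDiff_const

theorem ContDiff.uncurry4_d4W : ContDiff ℝ ∞ (uncurry4 (d4W F)) := by
  rw [uncurry4_d4W_eq_fderiv (hF.differentiable (by simp))]
  exact (hF.fderiv_right ENat.coe_top_add_one.le).clm_apply contDiff_const

theorem d4X_d4W_comm : d4X (d4W F) = d4W (d4X F) := by
  have hF' := hF.differentiable (by simp)
  funext t x y w
  rw [d4X_eq_fderiv (hF.uncurry4_d4W.differentiable (by simp) _),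
    d4W_eq_fderiv (hF.uncurry4_d4X.differentiable (by simp) _),
    uncurry4_d4W_eq_fderiv hF', uncurry4_d4X_eq_fderiv hF']
  exact fderiv_fderiv_apply_comm (hF.contDiffAt.of_le (by norm_cast)) _ _

theorem d4Y_d4W_comm : d4Y (d4W F) = d4W (d4Y F) := by
  have hF' := hF.differentiable (by simp)
  funext t x y w
  rw [d4Y_eq_fderiv (hF.uncurry4_d4W.differentiable (by simp) _),
    d4W_eq_fderiv (hF.uncurry4_d4Y.differentiable (by simp) _),
    uncurry4_d4W_eq_fderiv hF', uncurry4_d4Y_eq_fderiv hF']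
  exact fderiv_fderiv_apply_comm (hF.contDiffAt.of_le (by norm_cast)) _ _

end Smooth

end FourVariables

section Substitution

def substLast (F : R4) (z : ℝ → ℝ → ℝ) : R4 := fun t x y w => F t x y (z t w)

variable {F : R4} {z : ℝ → ℝ → ℝ} {t x y w : ℝ}

@[simp]
theorem substLast_apply : substLast F z t x y w = F t x y (z t w) :=
  rfl

theorem d4X_substLast : d4X (substLast F z) = substLast (d4X F) z :=
  rfl

theorem d4Y_substLast : d4Y (substLast F z) = substLast (d4Y F) z :=
  rfl

theorem d4W_substLast {zw : ℝ} (hF : DifferentiableAt ℝ (F t x y) (z t w))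
    (hz : HasDerivAt (z t) zw w) :
    d4W (substLast F z) t x y w = d4W F t x y (z t w) * zw :=
  (hF.hasDerivAt.comp w hz).deriv

theorem d4T_substLast {zt : ℝ} (hF : DifferentiableAt ℝ (uncurry4 F) (t, x, y, z t w))
    (hz : HasDerivAt (fun s => z s w) zt t) :
    d4T (substLast F z) t x y w = d4T F t x y (z t w) + d4W F t x y (z t w) * zt := by
  have := hF.hasFDerivAt.comp_hasDerivAt t ((hasDerivAt_id' t).prodMk
    ((hasDerivAt_const t x).prodMk ((hasDerivAt_const t y).prodMk hz)))
  have hv : ((1 : ℝ), (0 : ℝ), (0 : ℝ), zt) = (1, 0, 0, 0) + zt • (0, 0, 0, 1) := by simp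
  rw [d4T_eq_fderiv hF, d4W_eq_fderiv hF, mul_comm, ← smul_eq_mul, ← map_smul, ← map_add, ← hv]
  exact this.deriv

theorem d4W_d4W_substLast {zw : ℝ → ℝ} {zww : ℝ} (hF : Differentiable ℝ (F t x y))
    (hF' : Differentiable ℝ (d4W F t x y)) (hz : ∀ᶠ u in 𝓝 w, HasDerivAt (z t) (zw u) u)
    (hzw : HasDerivAt zw zww w) :
    d4W (d4W (substLast F z)) t x y w
      = d4W (d4W F) t x y (z t w) * zw w ^ 2 + d4W F t x y (z t w) * zww := by
  have hev : (fun u => d4W (substLast F z) t x y u) =ᶠ[𝓝 w] fun u => d4W F t x y (z t u) * zw u :=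
    hz.mono fun u hu => d4W_substLast (hF _) hu
  have hzt : HasDerivAt (fun u => d4W F t x y (z t u)) (d4W (d4W F) t x y (z t w) * zw w) w :=
    (hF' _).hasDerivAt.comp w hz.self_of_nhds
  change deriv _ w = _
  rw [hev.deriv_eq, (hzt.fun_mul hzw).deriv]
  ring

/-- `r` stands for the value `R(t, w)` of the risk tolerance: the conditions say that
`R ∂_w z = 1` and `∂_t z + ½ λ² R² ∂_w² z + λ² R ∂_w z = 0` at `(t, w)`. -/
def IsConstCoeffCoordAt (lam r : ℝ) (z : ℝ → ℝ → ℝ) (t w : ℝ) : Prop :=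
  ∃ zt zww : ℝ, ∃ zw : ℝ → ℝ, HasDerivAt (fun s => z s w) zt t ∧
    (∀ᶠ u in 𝓝 w, HasDerivAt (z t) (zw u) u) ∧ HasDerivAt zw zww w ∧
    r * zw w = 1 ∧ zt + 1/2 * lam^2 * r^2 * zww + lam^2 * r * zw w = 0

theorem IsConstCoeffCoordAt.d4T_add_substLast {lam r : ℝ} (hz : IsConstCoeffCoordAt lam r z t w)
    (hF : ContDiff ℝ ∞ (uncurry4 F)) (a b x y : ℝ) :
    d4T (substLast F z) t x y w
        + (1/2 * lam^2 * r^2 * d4W (d4W (substLast F z)) t x y w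
          + lam^2 * r * d4W (substLast F z) t x y w
          + a * r * d4W (d4Y (substLast F z)) t x y w
          + b * r * d4W (d4X (substLast F z)) t x y w)
      = d4T F t x y (z t w)
        + (1/2 * lam^2 * d4W (d4W F) t x y (z t w)
          + a * d4Y (d4W F) t x y (z t w)
          + b * d4X (d4W F) t x y (z t w)) := by
  obtain ⟨zt, zww, zw, hzt, hzw, hzww, hr, hdrift⟩ := hz
  have hslice {G : R4} (hG : ContDiff ℝ ∞ (uncurry4 G)) : Differentiable ℝ (G t x y) :=
    (hG.differentiable (by simp)).slice_of_uncurry4 t x y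
  rw [d4T_substLast (hF.differentiable (by simp) _) hzt,
    d4W_substLast (hslice hF _) hzw.self_of_nhds, d4X_substLast, d4Y_substLast,
    d4W_substLast (hslice hF.uncurry4_d4X _) hzw.self_of_nhds,
    d4W_substLast (hslice hF.uncurry4_d4Y _) hzw.self_of_nhds,
    d4W_d4W_substLast (hslice hF) (hslice hF.uncurry4_d4W) hzw hzww,
    d4X_d4W_comm hF, d4Y_d4W_comm hF]
  linear_combination d4W F t x y (z t w) * hdrift
    + (1/2 * lam^2 * d4W (d4W F) t x y (z t w) * (r * zw w + 1)
      + a * d4W (d4Y F) t x y (z t w) + b * d4W (d4X F) t x y (z t w)) * hr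

end Substitution

section MertonChangeOfVariable

def zCoord (P : ℝ → ℝ → ℝ) (lam T : ℝ) : ℝ → ℝ → ℝ :=
  fun t w => -Real.log (P t w) + (1/2) * lam^2 * (T - t)

variable {P V0 : ℝ → ℝ → ℝ} {U : Set (ℝ × ℝ)} {lam T t w : ℝ}

theorem hasDerivAt_zCoord_fst (hP : DifferentiableAt ℝ (uncurry P) (t, w)) (hP0 : P t w ≠ 0) :
    HasDerivAt (fun s => zCoord P lam T s w) (-(dT2 P t w) / P t w - 1/2 * lam^2) t := by
  have hlin : HasDerivAt (fun s => (1/2) * lam^2 * (T - s)) (1/2 * lam^2 * -1) t :=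
    ((hasDerivAt_id' t).const_sub T).const_mul _
  exact (((hasDerivAt_dT2 hP).log hP0).neg.add hlin).congr_deriv (by ring)

theorem hasDerivAt_zCoord_snd (hP : DifferentiableAt ℝ (uncurry P) (t, w)) (hP0 : P t w ≠ 0) :
    HasDerivAt (zCoord P lam T t) (-(dW2 P t w) / P t w) w :=
  (((hasDerivAt_dW2 hP).log hP0).neg.add_const _).congr_deriv (neg_div _ _).symm

theorem dT2_dW2_eq_of_hjb (hU : IsOpen U) (hV : ContDiffOn ℝ ∞ (uncurry V0) U) (hp : (t, w) ∈ U)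
    (hHJB : (fun u => dT2 V0 t u)
      =ᶠ[𝓝 w] fun u => 1/2 * lam^2 * dW2 V0 t u ^ 2 / dW2 (dW2 V0) t u)
    (hPw : dW2 (dW2 V0) t w ≠ 0) :
    dT2 (dW2 V0) t w = lam^2 * dW2 V0 t w
      - 1/2 * lam^2 * dW2 V0 t w ^ 2 * dW2 (dW2 (dW2 V0)) t w / dW2 (dW2 V0) t w ^ 2 := by
  have hP := hV.uncurry_dW2 hU
  have hP' := hasDerivAt_dW2 (hP.differentiableAt_of_isOpen hU hp)
  have hPw' := hasDerivAt_dW2 ((hP.uncurry_dW2 hU).differentiableAt_of_isOpen hU hp)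
  rw [dT2_dW2_comm hU hV hp, dW2, hHJB.deriv_eq,
    (((hP'.fun_pow 2).const_mul (1/2 * lam^2)).fun_div hPw' hPw).deriv]
  field_simp
  ring

theorem isConstCoeffCoordAt_zCoord (hU : IsOpen U) (hV : ContDiffOn ℝ ∞ (uncurry V0) U)
    (hp : (t, w) ∈ U) (hP0 : ∀ s u, (s, u) ∈ U → dW2 V0 s u ≠ 0)
    (hPw : ∀ s u, (s, u) ∈ U → dW2 (dW2 V0) s u ≠ 0)
    (hHJB : ∀ s u, (s, u) ∈ U → dT2 V0 s u = 1/2 * lam^2 * dW2 V0 s u ^ 2 / dW2 (dW2 V0) s u) :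
    IsConstCoeffCoordAt lam (-(dW2 V0 t w) / dW2 (dW2 V0) t w) (zCoord (dW2 V0) lam T) t w := by
  have hnear : ∀ᶠ u in 𝓝 w, (t, u) ∈ U :=
    (continuous_const.prodMk continuous_id).continuousAt.preimage_mem_nhds (hU.mem_nhds hp)
  have hP := hV.uncurry_dW2 hU
  refine ⟨_, _, fun u => -(dW2 (dW2 V0) t u) / dW2 V0 t u,
    hasDerivAt_zCoord_fst (hP.differentiableAt_of_isOpen hU hp) (hP0 t w hp),
    hnear.mono fun u hu => hasDerivAt_zCoord_snd (hP.differentiableAt_of_isOpen hU hu) (hP0 t u hu),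
    (hasDerivAt_dW2 ((hP.uncurry_dW2 hU).differentiableAt_of_isOpen hU hp)).fun_neg.fun_div
      (hasDerivAt_dW2 (hP.differentiableAt_of_isOpen hU hp)) (hP0 t w hp),
    by field_simp [hP0 t w hp, hPw t w hp], ?_⟩
  rw [dT2_dW2_eq_of_hjb hU hV hp (hnear.mono fun u hu => hHJB t u hu) (hPw t w hp)]
  field_simp [hP0 t w hp, hPw t w hp]
  ring

end MertonChangeOfVariable

theorem change_of_variables_constant_coefficients_general
    (T σ0 β0 μ0 c0 lam0 ρ b0 : ℝ)
    (V0 : ℝ → ℝ → ℝ)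
    (hV0 : ContDiffOn ℝ (⊤ : ℕ∞) (fun p : ℝ × ℝ => V0 p.1 p.2)
      (Set.Iic T ×ˢ Set.Ioi (0:ℝ)))
    (hpos : ∀ t ≤ T, ∀ w > (0:ℝ), 0 < dW2 V0 t w)
    (hneg : ∀ t ≤ T, ∀ w > (0:ℝ), dW2 (dW2 V0) t w < 0)
    (hHJB : ∀ t < T, ∀ w > (0:ℝ),
      dT2 V0 t w - (1/2) * lam0^2 * (dW2 V0 t w)^2 / dW2 (dW2 V0) t w = 0)
    (R : ℝ → ℝ → ℝ)
    (hR : ∀ t w, R t w = -(dW2 V0 t w) / dW2 (dW2 V0) t w)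
    (z : ℝ → ℝ → ℝ)
    (hz : ∀ t w, z t w = -Real.log (dW2 V0 t w) + (1/2) * lam0^2 * (T - t))
    (q : R4)
    (hq : ContDiff ℝ (⊤ : ℕ∞) (fun p : ℝ × ℝ × ℝ × ℝ => q p.1 p.2.1 p.2.2.1 p.2.2.2))
    (Vhat : R4)
    (hVhat : ∀ t x y w, Vhat t x y w = q t x y (z t w)) :
    ∀ t < T, ∀ (x y : ℝ), ∀ w > (0:ℝ),
      d4T Vhat t x y w
        + ((1/2) * σ0^2 * d4X (d4X Vhat) t x y w
            + ρ * σ0 * β0 * d4X (d4Y Vhat) t x y w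
            + (1/2) * β0^2 * d4Y (d4Y Vhat) t x y w
            + b0 * d4X Vhat t x y w
            + c0 * d4Y Vhat t x y w)
        + ((1/2) * lam0^2 * (R t w)^2 * d4W (d4W Vhat) t x y w
            + lam0^2 * R t w * d4W Vhat t x y w
            + ρ * β0 * lam0 * R t w * d4W (d4Y Vhat) t x y w
            + μ0 * R t w * d4W (d4X Vhat) t x y w)
      = d4T q t x y (z t w)
        + ((1/2) * σ0^2 * d4X (d4X q) t x y (z t w)
            + ρ * σ0 * β0 * d4X (d4Y q) t x y (z t w)
            + (1/2) * β0^2 * d4Y (d4Y q) t x y (z t w)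
            + b0 * d4X q t x y (z t w)
            + c0 * d4Y q t x y (z t w))
        + ((1/2) * lam0^2 * d4W (d4W q) t x y (z t w)
            + ρ * β0 * lam0 * d4Y (d4W q) t x y (z t w)
            + μ0 * d4X (d4W q) t x y (z t w)) := by
  intro t ht x y w hw
  obtain rfl : z = zCoord (dW2 V0) lam0 T := funext₂ hz
  obtain rfl : Vhat = substLast q (zCoord (dW2 V0) lam0 T) := by
    funext t x y w
    exact hVhat t x y w
  have hcoord : IsConstCoeffCoordAt lam0 (R t w) (zCoord (dW2 V0) lam0 T) t w := by
    rw [hR]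
    exact isConstCoeffCoordAt_zCoord (isOpen_Iio.prod isOpen_Ioi)
      (hV0.mono (prod_mono Iio_subset_Iic_self subset_rfl)) ⟨ht, hw⟩
      (fun s u hsu => (hpos s hsu.1.le u hsu.2).ne') (fun s u hsu => (hneg s hsu.1.le u hsu.2).ne)
      (fun s u hsu => sub_eq_zero.1 (hHJB s hsu.1 u hsu.2))
  have hB := hcoord.d4T_add_substLast hq (ρ * β0 * lam0) μ0 x y
  simp only [d4X_substLast, d4Y_substLast, substLast_apply] at hB ⊢
  linear_combination hB

/-- Change of variables `z(t,w) = -log ∂_w V⁰ + (1/2)λ₀²(T-t)` transforms the operator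
`∂_t + 𝒜₀ + ℬ₀` (acting on `V̂(t,x,y,w) = q(t,x,y,z(t,w))`) into the constant-coefficient
operator `∂_t + 𝒜₀ + 𝒞₀` acting on `q`. -/
theorem change_of_variables_constant_coefficients
    (T σ0 β0 μ0 c0 lam0 ρ b0 : ℝ)
    (hσ0 : 0 < σ0) (hρ : ρ ∈ Set.Ioo (-1 : ℝ) 1)
    (hb0 : b0 = μ0 - σ0^2/2)
    (V0 : ℝ → ℝ → ℝ)
    (hV0 : ContDiffOn ℝ (⊤ : ℕ∞) (fun p : ℝ × ℝ => V0 p.1 p.2)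
      (Set.Iic T ×ˢ Set.Ioi (0:ℝ)))
    (hpos : ∀ t ≤ T, ∀ w > (0:ℝ), 0 < dW2 V0 t w)
    (hneg : ∀ t ≤ T, ∀ w > (0:ℝ), dW2 (dW2 V0) t w < 0)
    (hHJB : ∀ t < T, ∀ w > (0:ℝ),
      dT2 V0 t w - (1/2) * lam0^2 * (dW2 V0 t w)^2 / dW2 (dW2 V0) t w = 0)
    (R : ℝ → ℝ → ℝ)
    (hR : ∀ t w, R t w = -(dW2 V0 t w) / dW2 (dW2 V0) t w)
    (z : ℝ → ℝ → ℝ)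
    (hz : ∀ t w, z t w = -Real.log (dW2 V0 t w) + (1/2) * lam0^2 * (T - t))
    (q : R4)
    (hq : ContDiff ℝ (⊤ : ℕ∞) (fun p : ℝ × ℝ × ℝ × ℝ => q p.1 p.2.1 p.2.2.1 p.2.2.2))
    (Vhat : R4)
    (hVhat : ∀ t x y w, Vhat t x y w = q t x y (z t w)) :
    ∀ t < T, ∀ (x y : ℝ), ∀ w > (0:ℝ),
      d4T Vhat t x y w
        + ((1/2) * σ0^2 * d4X (d4X Vhat) t x y w
            + ρ * σ0 * β0 * d4X (d4Y Vhat) t x y w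
            + (1/2) * β0^2 * d4Y (d4Y Vhat) t x y w
            + b0 * d4X Vhat t x y w
            + c0 * d4Y Vhat t x y w)
        + ((1/2) * lam0^2 * (R t w)^2 * d4W (d4W Vhat) t x y w
            + lam0^2 * R t w * d4W Vhat t x y w
            + ρ * β0 * lam0 * R t w * d4W (d4Y Vhat) t x y w
            + μ0 * R t w * d4W (d4X Vhat) t x y w)
      = d4T q t x y (z t w)
        + ((1/2) * σ0^2 * d4X (d4X q) t x y (z t w)
            + ρ * σ0 * β0 * d4X (d4Y q) t x y (z t w)
            + (1/2) * β0^2 * d4Y (d4Y q) t x y (z t w)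
            + b0 * d4X q t x y (z t w)
            + c0 * d4Y q t x y (z t w))
        + ((1/2) * lam0^2 * d4W (d4W q) t x y (z t w)
            + ρ * β0 * lam0 * d4Y (d4W q) t x y (z t w)
            + μ0 * d4X (d4W q) t x y (z t w)) :=
  change_of_variables_constant_coefficients_general T σ0 β0 μ0 c0 lam0 ρ b0 V0 hV0 hpos hneg hHJB R
    hR z hz q hq Vhat hVhat
end
end

section
/- Let γ > 0 with γ ≠ 1, ρ ∈ (-1, 1), and set η := γ / (γ + (1-γ)ρ²) (note γ + (1-γ)ρ² = γ(1-ρ²) + ρ² > 0). Let μ, σ, c, β : ℝ → ℝ be smooth with σ > 0, and set λ(y) := μ(y)/σ(y). Suppose ψ(t, y) is a smooth, strictly positive function on [0, T] × ℝ satisfying the linear PDE ∂_t ψ + (1/2) β(y)² ∂_y² ψ + ( c(y) + ((1-γ)/γ) ρ β(y) λ(y) ) ∂_y ψ + ((1-γ)/(ηγ)) (1/2) λ(y)² ψ = 0. Then V(t, y, w) := (w^{1-γ}/(1-γ)) ψ(t, y)^η satisfies ∂_w² V < 0 for w > 0 and solves the nonlinear HJB equation ∂_t V + (1/2) β(y)²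 ∂_y² V + c(y) ∂_y V - ( ρ β(y) ∂_y∂_w V + λ(y) ∂_w V )² / (2 ∂_w² V) = 0 on [0, T) × ℝ × (0, ∞). Moreover, if ψ(T, y) = 1 for all y then V(T, y, w) = w^{1-γ}/(1-γ). -/
/-!
Write `V = U(w) φ(t, y)` with `U` the power utility and `φ = ψ^η`. Every partial derivative of `V`
factors, and `U'² / U'' = -((1 - γ)/γ) U`, so the HJB residual is `U` times an expression in `ψ`
and its derivatives once the chain rule for `ψ^η` is applied and `∂_t ψ` is eliminated with the
linear PDE. In that expression the `λ²` and `λ ∂_y ψ` terms cancel for every `η`, and the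
`(∂_y ψ)²` terms cancel exactly because `η (γ + (1 - γ) ρ²) = γ`.
-/

noncomputable section

/-- Partial derivative in the time variable of `V(t, y, w)`. -/
def pT (f : ℝ → ℝ → ℝ → ℝ) : ℝ → ℝ → ℝ → ℝ :=
  fun t y w => deriv (fun s => f s y w) t

/-- Partial derivative in the volatility-factor variable of `V(t, y, w)`. -/
def pY (f : ℝ → ℝ → ℝ → ℝ) : ℝ → ℝ → ℝ → ℝ :=
  fun t y w => deriv (fun u => f t u w) y

/-- Partial derivative in the wealth variable of `V(t, y, w)`. -/
def pW (f : ℝ → ℝ → ℝ → ℝ) : ℝ → ℝ → ℝ → ℝ :=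
  fun t y w => deriv (fun v => f t y v) w

/-- Partial derivative in the time variable of `ψ(t, y)`. -/
def pT2 (f : ℝ → ℝ → ℝ) : ℝ → ℝ → ℝ := fun t y => deriv (fun s => f s y) t

/-- Partial derivative in the `y` variable of `ψ(t, y)`. -/
def pY2 (f : ℝ → ℝ → ℝ) : ℝ → ℝ → ℝ := fun t y => deriv (fun u => f t u) y

open Set Function
open scoped ContDiff

section Slices

variable {I : Set ℝ} {ψ : ℝ → ℝ → ℝ} {m n : ℕ∞ω}

theorem ContDiffOn.contDiff_curry_left
    (hψ : ContDiffOn ℝ n (uncurry ψ) (I ×ˢ univ)) {t : ℝ} (ht : t ∈ I) :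
    ContDiff ℝ n (ψ t) := by
  rw [← contDiffOn_univ]
  exact hψ.comp (contDiffOn_const.prodMk contDiffOn_id) fun u _ => ⟨ht, mem_univ u⟩

theorem ContDiffOn.contDiffOn_curry_right
    (hψ : ContDiffOn ℝ n (uncurry ψ) (I ×ˢ univ)) (y : ℝ) :
    ContDiffOn ℝ n (fun t => ψ t y) I :=
  hψ.comp (contDiffOn_id.prodMk contDiffOn_const) fun _ ht => ⟨ht, mem_univ y⟩

theorem contDiffOn_uncurry_pY2 (hI : UniqueDiffOn ℝ I)
    (hψ : ContDiffOn ℝ n (uncurry ψ) (I ×ˢ univ)) (hmn : m + 1 ≤ n) :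
    ContDiffOn ℝ m (uncurry (pY2 ψ)) (I ×ˢ univ) := by
  refine ((hψ.fderivWithin (hI.prod uniqueDiffOn_univ) hmn).clm_apply
    (contDiffOn_const (c := ((0 : ℝ), (1 : ℝ))))).congr ?_
  rintro ⟨t, y⟩ ⟨ht, -⟩
  have hn : n ≠ 0 := by
    rintro rfl
    simp at hmn
  have hline : HasDerivWithinAt (fun u => (t, u)) ((0 : ℝ), (1 : ℝ)) univ y :=
    ((hasDerivAt_const y t).prodMk (hasDerivAt_id y)).hasDerivWithinAt
  have hψy := ((hψ.differentiableOn hn (t, y) ⟨ht, mem_univ y⟩).hasFDerivWithinAt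
    |>.comp_hasDerivWithinAt y hline fun u _ => ⟨ht, mem_univ u⟩)
  rw [hasDerivWithinAt_univ] at hψy
  exact hψy.deriv

end Slices

theorem derivWithin_Icc_eq_deriv {g R : ℝ → ℝ} {a b x : ℝ} (hab : a < b)
    (hg : ContDiffOn ℝ 1 g (Icc a b)) (hR : ContinuousOn R (Icc a b))
    (hgR : ∀ t ∈ Icc a b, deriv g t = R t) (hx : x ∈ Icc a b) :
    derivWithin g (Icc a b) x = deriv g x := by
  have hinterior : EqOn (derivWithin g (Icc a b)) R (Ioo a b) := fun t ht => by
    rw [derivWithin_of_mem_nhds (Icc_mem_nhds ht.1 ht.2), hgR t (Ioo_subset_Icc_self ht)]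
  rw [hinterior.of_subset_closure (hg.continuousOn_derivWithin (uniqueDiffOn_Icc hab) le_rfl)
    hR Ioo_subset_Icc_self (closure_Ioo hab.ne).superset hx, hgR x hx]

theorem deriv_comp_of_hasDerivWithinAt {F g : ℝ → ℝ} {F' x : ℝ} {s : Set ℝ}
    (hF : HasDerivAt F F' (g x)) (hg : HasDerivWithinAt g (deriv g x) s x)
    (hs : UniqueDiffWithinAt ℝ s x) :
    deriv (fun y => F (g y)) x = F' * deriv g x := by
  by_cases h : DifferentiableAt ℝ (fun y => F (g y)) x
  · rw [← h.hasDerivAt.hasDerivWithinAt.derivWithin hs]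
    exact (hF.comp_hasDerivWithinAt x hg).derivWithin hs
  · have hg' : ¬DifferentiableAt ℝ g x := fun hg' => h (hF.differentiableAt.comp x hg')
    rw [deriv_zero_of_not_differentiableAt h, deriv_zero_of_not_differentiableAt hg', mul_zero]

/-- `ψ` is only smooth on `[T₀, T₁] × ℝ`, so at `t = T₀` the two-sided derivative `pT2 ψ` in the
PDE may be the junk value `0`. Since the other terms of the PDE are continuous up to the boundary,
the PDE itself forces `pT2 ψ` to be the one-sided derivative there. -/
theorem hasDerivWithinAt_pT2_of_pde {ψ : ℝ → ℝ → ℝ} {a b k : ℝ → ℝ} {T₀ T₁ : ℝ} (hT : T₀ < T₁)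
    (hψ : ContDiffOn ℝ 2 (uncurry ψ) (Icc T₀ T₁ ×ˢ univ))
    (hpde : ∀ t ∈ Icc T₀ T₁, ∀ y, pT2 ψ t y + a y * pY2 (pY2 ψ) t y + b y * pY2 ψ t y
      + k y * ψ t y = 0)
    {t : ℝ} (ht : t ∈ Icc T₀ T₁) (y : ℝ) :
    HasDerivWithinAt (fun s => ψ s y) (pT2 ψ t y) (Icc T₀ T₁) t := by
  have hI := uniqueDiffOn_Icc hT
  have hψy := contDiffOn_uncurry_pY2 hI hψ (m := 1) (by norm_num)
  have hψyy := contDiffOn_uncurry_pY2 hI hψy (m := 0) (by norm_num)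
  have hR : ContinuousOn (fun s => -(a y * pY2 (pY2 ψ) s y + b y * pY2 ψ s y + k y * ψ s y))
      (Icc T₀ T₁) :=
    ((((hψyy.contDiffOn_curry_right y).continuousOn.const_smul (a y)).add
      ((hψy.contDiffOn_curry_right y).continuousOn.const_smul (b y))).add
      ((hψ.contDiffOn_curry_right y).continuousOn.const_smul (k y))).neg
  have hψt := hψ.contDiffOn_curry_right y
  have h := ((hψt.differentiableOn (by norm_num)) t ht).hasDerivWithinAt
  rwa [derivWithin_Icc_eq_deriv hT (hψt.of_le (by norm_num)) hR
    (fun s hs => show pT2 ψ s y = _ by linarith [hpde s hs y]) ht] at h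

section Rpow

variable {ψ : ℝ → ℝ → ℝ} {η t y : ℝ}

theorem pT2_rpow {S : Set ℝ} (hψ : HasDerivWithinAt (fun s => ψ s y) (pT2 ψ t y) S t)
    (hS : UniqueDiffWithinAt ℝ S t) (hpos : 0 < ψ t y) :
    pT2 (fun t y => ψ t y ^ η) t y = η * ψ t y ^ (η - 1) * pT2 ψ t y :=
  deriv_comp_of_hasDerivWithinAt (g := fun s => ψ s y)
    (Real.hasDerivAt_rpow_const (Or.inl hpos.ne')) hψ hS

theorem pY2_rpow (hψ : Differentiable ℝ (ψ t)) (hpos : ∀ y, 0 < ψ t y) :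
    pY2 (fun t y => ψ t y ^ η) t y = pY2 ψ t y * η * ψ t y ^ (η - 1) :=
  deriv_rpow_const (hψ y) (Or.inl (hpos y).ne')

theorem pY2_pY2_rpow (hψ : ContDiff ℝ 2 (ψ t)) (hpos : ∀ y, 0 < ψ t y) :
    pY2 (pY2 fun t y => ψ t y ^ η) t y = pY2 (pY2 ψ) t y * η * ψ t y ^ (η - 1)
      + pY2 ψ t y * η * (pY2 ψ t y * (η - 1) * ψ t y ^ (η - 1 - 1)) := by
  have hψ1 := hψ.differentiable two_ne_zero
  have hfirst : (fun u => pY2 (fun t y => ψ t y ^ η) t u)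
      = fun u => pY2 ψ t u * η * ψ t u ^ (η - 1) :=
    funext fun u => pY2_rpow hψ1 hpos
  change deriv (fun u => pY2 (fun t y => ψ t y ^ η) t u) y = _
  rw [hfirst]
  exact ((hψ.differentiable_deriv_two y).hasDerivAt.mul_const η |>.mul
    ((hψ1 y).hasDerivAt.rpow_const (Or.inl (hpos y).ne'))).deriv

end Rpow

section Separable

variable (u : ℝ → ℝ) (φ : ℝ → ℝ → ℝ)

theorem pT_mul : pT (fun t y w => u w * φ t y) = fun t y w => u w * pT2 φ t y := by
  funext t y w
  exact deriv_const_mul_field (u w)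

theorem pY_mul : pY (fun t y w => u w * φ t y) = fun t y w => u w * pY2 φ t y := by
  funext t y w
  exact deriv_const_mul_field (u w)

theorem pW_mul : pW (fun t y w => u w * φ t y) = fun t y w => deriv u w * φ t y := by
  funext t y w
  exact deriv_mul_const_field (φ t y)

end Separable

def powerUtility (γ w : ℝ) : ℝ := w ^ (1 - γ) / (1 - γ)

theorem deriv_powerUtility {γ w : ℝ} (hγ : γ ≠ 1) (hw : 0 < w) :
    deriv (powerUtility γ) w = w ^ (-γ) := by
  have h1γ : 1 - γ ≠ 0 := sub_ne_zero.2 hγ.symm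
  change deriv (fun v => v ^ (1 - γ) / (1 - γ)) w = _
  rw [((Real.hasDerivAt_rpow_const (Or.inl hw.ne')).div_const (1 - γ)).deriv]
  field_simp
  ring_nf

theorem deriv_deriv_powerUtility {γ w : ℝ} (hγ : γ ≠ 1) (hw : 0 < w) :
    deriv (deriv (powerUtility γ)) w = -γ * w ^ (-γ - 1) := by
  rw [(Filter.eventuallyEq_of_mem (Ioi_mem_nhds hw) fun v hv => deriv_powerUtility hγ hv).deriv_eq,
    Real.deriv_rpow_const]

theorem merton_hjb_residual_eq_zero {γ ρ η w a r p q B C L : ℝ} (hγ : γ ≠ 0)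
    (hγ1 : γ ≠ 1) (hQ : γ + (1 - γ) * ρ ^ 2 ≠ 0) (hη : η = γ / (γ + (1 - γ) * ρ ^ 2))
    (hw : 0 < w) (ha : 0 < a)
    (hr : r + 1 / 2 * B ^ 2 * q + (C + (1 - γ) / γ * ρ * B * L) * p
      + (1 - γ) / (η * γ) * (1 / 2) * L ^ 2 * a = 0) :
    powerUtility γ w * (η * a ^ (η - 1) * r)
      + 1 / 2 * B ^ 2 * (powerUtility γ w * (q * η * a ^ (η - 1)
        + p * η * (p * (η - 1) * a ^ (η - 1 - 1))))
      + C * (powerUtility γ w * (p * η * a ^ (η - 1)))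
      - (ρ * B * (w ^ (-γ) * (p * η * a ^ (η - 1))) + L * (w ^ (-γ) * a ^ η)) ^ 2
        / (2 * (-γ * w ^ (-γ - 1) * a ^ η)) = 0 := by
  have h1γ : 1 - γ ≠ 0 := sub_ne_zero.2 hγ1.symm
  have hr' : r = -(1 / 2 * B ^ 2 * q + (C + (1 - γ) / γ * ρ * B * L) * p
      + (1 - γ) / (η * γ) * (1 / 2) * L ^ 2 * a) := by linarith
  have ha1 : a ^ (η - 1) = a ^ η / a := by rw [Real.rpow_sub ha, Real.rpow_one]
  have ha2 : a ^ (η - 1 - 1) = a ^ η / a / a := by rw [Real.rpow_sub ha, ha1, Real.rpow_one]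
  have hw1 : w ^ (1 - γ) = w * w ^ (-γ) := by
    rw [sub_eq_add_neg, Real.rpow_add hw, Real.rpow_one]
  have hw2 : w ^ (-γ - 1) = w ^ (-γ) / w := by rw [Real.rpow_sub hw, Real.rpow_one]
  have hP : 0 < a ^ η := Real.rpow_pos_of_pos ha η
  have hW : 0 < w ^ (-γ) := Real.rpow_pos_of_pos hw (-γ)
  rw [hr', powerUtility, ha2, ha1, hw1, hw2]
  generalize a ^ η = P at hP ⊢
  generalize w ^ (-γ) = W at hW ⊢
  subst hη
  field_simp
  ring

theorem distortion_transformation_solves_HJB_general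
    (γ ρ η T : ℝ) (hγ : 0 < γ) (hγ1 : γ ≠ 1) (hρ : ρ ∈ Set.Ioo (-1 : ℝ) 1)
    (hη : η = γ / (γ + (1 - γ) * ρ^2))
    (c β lam : ℝ → ℝ)
    (ψ : ℝ → ℝ → ℝ)
    (hψsmooth : ContDiffOn ℝ (⊤ : ℕ∞) (fun p : ℝ × ℝ => ψ p.1 p.2)
      (Set.Icc 0 T ×ˢ (Set.univ : Set ℝ)))
    (hψpos : ∀ t ∈ Set.Icc (0:ℝ) T, ∀ y : ℝ, 0 < ψ t y)
    (hψpde : ∀ t ∈ Set.Icc (0:ℝ) T, ∀ y : ℝ,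
      pT2 ψ t y + (1/2) * (β y)^2 * pY2 (pY2 ψ) t y
        + (c y + ((1 - γ)/γ) * ρ * β y * lam y) * pY2 ψ t y
        + ((1 - γ)/(η * γ)) * (1/2) * (lam y)^2 * ψ t y = 0)
    (V : ℝ → ℝ → ℝ → ℝ)
    (hV : ∀ t y w, V t y w = w ^ (1 - γ) / (1 - γ) * ψ t y ^ η) :
    (0 < γ + (1 - γ) * ρ^2) ∧
    (∀ t ∈ Set.Icc (0:ℝ) T, ∀ y : ℝ, ∀ w > (0:ℝ), pW (pW V) t y w < 0) ∧
    (∀ t ∈ Set.Ico (0:ℝ) T, ∀ y : ℝ, ∀ w > (0:ℝ),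
      pT V t y w + (1/2) * (β y)^2 * pY (pY V) t y w + c y * pY V t y w
        - (ρ * β y * pY (pW V) t y w + lam y * pW V t y w)^2
            / (2 * pW (pW V) t y w) = 0) ∧
    ((∀ y : ℝ, ψ T y = 1) →
      ∀ y : ℝ, ∀ w > (0:ℝ), V T y w = w ^ (1 - γ) / (1 - γ)) := by
  have hV' : V = fun t y w => powerUtility γ w * ψ t y ^ η := funext₃ hV
  have hψ2 : ContDiffOn ℝ 2 (uncurry ψ) (Icc 0 T ×ˢ univ) :=
    hψsmooth.of_le (WithTop.coe_le_coe.2 le_top)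
  have hρ2 : ρ ^ 2 < 1 := by nlinarith [hρ.1, hρ.2]
  have hQ : 0 < γ + (1 - γ) * ρ ^ 2 := by nlinarith [mul_pos hγ (sub_pos.2 hρ2), sq_nonneg ρ]
  refine ⟨hQ, ?_, ?_, ?_⟩
  · intro t ht y w hw
    simp only [hV', pW_mul, deriv_deriv_powerUtility hγ1 hw]
    exact mul_neg_of_neg_of_pos (mul_neg_of_neg_of_pos (neg_neg_of_pos hγ)
      (Real.rpow_pos_of_pos hw _)) (Real.rpow_pos_of_pos (hψpos t ht y) η)
  · intro t ht y w hw
    have htI := Ico_subset_Icc_self ht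
    have hslice := hψ2.contDiff_curry_left htI
    have hT : 0 < T := ht.1.trans_lt ht.2
    have hψt := hasDerivWithinAt_pT2_of_pde hT hψ2 hψpde htI y
    simp only [hV', pT_mul, pY_mul, pW_mul, deriv_powerUtility hγ1 hw,
      deriv_deriv_powerUtility hγ1 hw, pT2_rpow hψt (uniqueDiffOn_Icc hT t htI) (hψpos t htI y),
      pY2_rpow (hslice.differentiable two_ne_zero) (hψpos t htI),
      pY2_pY2_rpow hslice (hψpos t htI)]
    exact merton_hjb_residual_eq_zero hγ.ne' hγ1 hQ.ne' hη hw (hψpos t htI y)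
      (hψpde t htI y)
  · intro hT y w _
    rw [hV, hT y, Real.one_rpow, mul_one]

/-- The distortion transformation: if `ψ > 0` solves the linear Cauchy problem, then
`V = (w^{1-γ}/(1-γ)) ψ^η` with `η = γ/(γ+(1-γ)ρ²)` is strictly concave in wealth and
solves the nonlinear stochastic-volatility Merton HJB equation; if moreover `ψ(T,·) = 1`
then `V(T, y, w) = w^{1-γ}/(1-γ)`. -/
theorem distortion_transformation_solves_HJB
    (γ ρ η T : ℝ) (hγ : 0 < γ) (hγ1 : γ ≠ 1) (hρ : ρ ∈ Set.Ioo (-1 : ℝ) 1)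
    (hη : η = γ / (γ + (1 - γ) * ρ^2))
    (μ σ c β lam : ℝ → ℝ)
    (hμ : ContDiff ℝ (⊤ : ℕ∞) μ) (hσ : ContDiff ℝ (⊤ : ℕ∞) σ)
    (hc : ContDiff ℝ (⊤ : ℕ∞) c) (hβ : ContDiff ℝ (⊤ : ℕ∞) β)
    (hσpos : ∀ y, 0 < σ y)
    (hlam : ∀ y, lam y = μ y / σ y)
    (ψ : ℝ → ℝ → ℝ)
    (hψsmooth : ContDiffOn ℝ (⊤ : ℕ∞) (fun p : ℝ × ℝ => ψ p.1 p.2)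
      (Set.Icc 0 T ×ˢ (Set.univ : Set ℝ)))
    (hψpos : ∀ t ∈ Set.Icc (0:ℝ) T, ∀ y : ℝ, 0 < ψ t y)
    (hψpde : ∀ t ∈ Set.Icc (0:ℝ) T, ∀ y : ℝ,
      pT2 ψ t y + (1/2) * (β y)^2 * pY2 (pY2 ψ) t y
        + (c y + ((1 - γ)/γ) * ρ * β y * lam y) * pY2 ψ t y
        + ((1 - γ)/(η * γ)) * (1/2) * (lam y)^2 * ψ t y = 0)
    (V : ℝ → ℝ → ℝ → ℝ)
    (hV : ∀ t y w, V t y w = w ^ (1 - γ) / (1 - γ) * ψ t y ^ η) :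
    (0 < γ + (1 - γ) * ρ^2) ∧
    (∀ t ∈ Set.Icc (0:ℝ) T, ∀ y : ℝ, ∀ w > (0:ℝ), pW (pW V) t y w < 0) ∧
    (∀ t ∈ Set.Ico (0:ℝ) T, ∀ y : ℝ, ∀ w > (0:ℝ),
      pT V t y w + (1/2) * (β y)^2 * pY (pY V) t y w + c y * pY V t y w
        - (ρ * β y * pY (pW V) t y w + lam y * pW V t y w)^2
            / (2 * pW (pW V) t y w) = 0) ∧
    ((∀ y : ℝ, ψ T y = 1) →
      ∀ y : ℝ, ∀ w > (0:ℝ), V T y w = w ^ (1 - γ) / (1 - γ)) :=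
  distortion_transformation_solves_HJB_general γ ρ η T hγ hγ1 hρ hη c β lam ψ hψsmooth hψpos hψpde V
    hV
end
end

section
/- Let γ > 1, ρ ∈ (-1, 1), η := γ/(γ + (1-γ)ρ²), n ∈ ℕ, T > 0 and w > 0, and fix constants 0 < m ≤ K. Let ψ : [0, T] × ℝ → ℝ and ψ₀, ψ₁, …, ψ_n : [0, T] × ℝ → ℝ be functions such that: ψ₀(t, y) depends only on t; m ≤ ψ(t, y) ≤ K and m ≤ ψ₀(t) ≤ K for all (t, y); sup_y |ψ_k(t, y)| ≤ K (T - t)^{(k+2)/2} for each 1 ≤ k ≤ n and all t ∈ [0, T]; and sup_y |ψ(t, y) - Σ_{k=0}^n ψ_k(t, y)| ≤ K (T - t)^{(n+3)/2} for all t ∈ [0, T]. Define V(t, y) := (w^{1-γ}/(1-γ)) ψ(t, y)^η, V₀(t, y) := (w^{1-γ}/(1-γ)) ψ₀(t)^η, and for 1 ≤ k ≤ n, V_k(t, y) := (w^{1-γ}/(1-γ)) Σ_{m'=1}^{k} (1/m'!) [∏_{j=0}^{m'-1}(η - j)] ψ₀(t)^{η - m'} Σ_{(i₁,…,i_{m'})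 ∈ I_{k,m'}} ∏_{j=1}^{m'} ψ_{i_j}(t, y), where I_{k,m'} := { (i₁,…,i_{m'}) ∈ ℕ₊^{m'} : i₁ + ⋯ + i_{m'} = k }. Then there exists a constant C > 0 such that for all t ∈ [max(0, T-1), T] and all y ∈ ℝ, |V(t, y) - Σ_{k=0}^n V_k(t, y)| ≤ C (T - t)^{(n+3)/2}. -/
/-!
Write `a = ψ₀`, `D = ψ - ψ₀` and `E = ψ₁ + ⋯ + ψₙ`. With `δ = T - t ≤ 1` the hypotheses give
`E, D = O(δ^{3/2})` and `D - E = O(δ^{(n+3)/2})`. Taylor's formula for `x ↦ x^η` at `a`, with a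
remainder `O(|D|^{n+1}) = O(δ^{3(n+1)/2})` uniform for `a, x ∈ [m, K]`, reduces the claim to
`D^k - ∑_{j ≤ n} S_{k,j} = O(δ^{(n+3)/2})` for `1 ≤ k ≤ n`, where `S_{k,j}` is the sum of
`∏ ψ_{i_l}` over compositions `(i_1, …, i_k)` of `j`. Here `D^k - E^k = O(D - E)`, and
`E^k - ∑_{j ≤ n} S_{k,j}` is the sum of the products `∏ ψ_{i_l}` with `i_1 + ⋯ + i_k > n`,
each of which is `O(δ^{∑ (i_l + 2)/2}) = O(δ^{(n+3)/2})`.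
-/

noncomputable section

open Finset Filter Asymptotics
open scoped Nat

lemma sum_range_succ_eq_add_sum_Icc {M : Type*} [AddCommMonoid M] (f : ℕ → M) (n : ℕ) :
    ∑ k ∈ range (n + 1), f k = f 0 + ∑ k ∈ Icc 1 n, f k := by
  rw [sum_range_eq_add_Ico f (by omega), Finset.Ico_add_one_right_eq_Icc]

def rpowTaylorCoeff (β : ℝ) (k : ℕ) : ℝ := 1 / (k ! : ℝ) * ∏ j ∈ range k, (β - j)

lemma succ_mul_rpowTaylorCoeff_succ (β : ℝ) (k : ℕ) :
    ((k : ℝ) + 1) * rpowTaylorCoeff β (k + 1) = β * rpowTaylorCoeff (β - 1) k := by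
  have hprod : ∏ j ∈ range (k + 1), (β - j) = β * ∏ j ∈ range k, (β - 1 - j) := by
    rw [prod_range_succ', Nat.cast_zero, sub_zero, mul_comm]
    congr 1
    exact prod_congr rfl fun j _ => by push_cast; ring
  rw [rpowTaylorCoeff, rpowTaylorCoeff, hprod, Nat.factorial_succ, Nat.cast_mul]
  field_simp
  push_cast
  ring

def rpowTaylor (β a : ℝ) (n : ℕ) (z : ℝ) : ℝ :=
  ∑ k ∈ range n, rpowTaylorCoeff β k * a ^ (β - k) * (z - a) ^ k

lemma rpowTaylor_succ (β a z : ℝ) (n : ℕ) :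
    rpowTaylor β a (n + 1) z =
      a ^ β + ∑ k ∈ Icc 1 n, rpowTaylorCoeff β k * a ^ (β - k) * (z - a) ^ k := by
  simp [rpowTaylor, sum_range_succ_eq_add_sum_Icc, rpowTaylorCoeff]

lemma rpowTaylor_succ_self (β a : ℝ) (n : ℕ) : rpowTaylor β a (n + 1) a = a ^ β := by
  simp [rpowTaylor, sum_range_succ', rpowTaylorCoeff]

lemma hasDerivAt_rpowTaylor_succ (β a z : ℝ) (n : ℕ) :
    HasDerivAt (rpowTaylor β a (n + 1)) (β * rpowTaylor (β - 1) a n z) z := by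
  have hterm : ∀ k ∈ range n,
      HasDerivAt (fun z => rpowTaylorCoeff β (k + 1) * a ^ (β - (k + 1 : ℕ)) * (z - a) ^ (k + 1))
        (β * (rpowTaylorCoeff (β - 1) k * a ^ (β - 1 - k) * (z - a) ^ k)) z := by
    intro k _
    refine ((((hasDerivAt_id z).sub_const a).pow (k + 1)).const_mul _).congr_deriv ?_
    rw [Nat.add_sub_cancel, show β - ((k + 1 : ℕ) : ℝ) = β - 1 - k by push_cast; ring]
    simp only [id, Nat.cast_succ]
    linear_combination (a ^ (β - 1 - k) * (z - a) ^ k) * succ_mul_rpowTaylorCoeff_succ β k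
  have hshift : rpowTaylor β a (n + 1) = fun z => a ^ β +
      ∑ k ∈ range n, rpowTaylorCoeff β (k + 1) * a ^ (β - (k + 1 : ℕ)) * (z - a) ^ (k + 1) :=
    funext fun z => by simp [rpowTaylor, sum_range_succ', rpowTaylorCoeff, add_comm]
  rw [hshift, rpowTaylor, mul_sum]
  exact (HasDerivAt.fun_sum hterm).const_add _

lemma abs_sub_le_mul_abs_sub_pow_succ {f f' : ℝ → ℝ} {a x C : ℝ} {k : ℕ} (hC : 0 ≤ C)
    (hf : ∀ z ∈ Set.uIcc a x, HasDerivAt f (f' z) z)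
    (hf' : ∀ z ∈ Set.uIcc a x, |f' z| ≤ C * |z - a| ^ k) :
    |f x - f a| ≤ C * |x - a| ^ (k + 1) := by
  have hbound : ∀ z ∈ Set.uIcc a x, ‖f' z‖ ≤ C * |x - a| ^ k := fun z hz =>
    (hf' z hz).trans <|
      mul_le_mul_of_nonneg_left
        (pow_le_pow_left₀ (abs_nonneg _) (Set.abs_sub_left_of_mem_uIcc hz) k) hC
  have := (convex_uIcc a x).norm_image_sub_le_of_norm_hasDerivWithin_le
    (fun z hz => (hf z hz).hasDerivWithinAt) hbound Set.left_mem_uIcc Set.right_mem_uIcc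
  rwa [Real.norm_eq_abs, Real.norm_eq_abs, mul_assoc, ← pow_succ] at this

lemma exists_abs_rpow_le {m : ℝ} (hm : 0 < m) (K β : ℝ) :
    ∃ C, 0 ≤ C ∧ ∀ z ∈ Set.Icc m K, |z ^ β| ≤ C := by
  have hcont : ContinuousOn (fun z : ℝ => z ^ β) (Set.Icc m K) := fun z hz =>
    (Real.continuousAt_rpow_const z β (Or.inl (hm.trans_le hz.1).ne')).continuousWithinAt
  obtain ⟨C, hC⟩ := isCompact_Icc.exists_bound_of_continuousOn hcont
  exact ⟨max C 0, le_max_right _ _, fun z hz => (hC z hz).trans (le_max_left _ _)⟩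

theorem exists_abs_rpow_sub_rpowTaylor_le {m : ℝ} (hm : 0 < m) (K : ℝ) (n : ℕ) (β : ℝ) :
    ∃ C, 0 ≤ C ∧ ∀ a ∈ Set.Icc m K, ∀ x ∈ Set.Icc m K,
      |x ^ β - rpowTaylor β a n x| ≤ C * |x - a| ^ n := by
  induction n generalizing β with
  | zero =>
    obtain ⟨C, hC, hCb⟩ := exists_abs_rpow_le hm K β
    exact ⟨C, hC, fun a _ x hx => by simpa [rpowTaylor] using hCb x hx⟩
  | succ n ih =>
    obtain ⟨C, hC, hCb⟩ := ih (β - 1)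
    refine ⟨|β| * C, by positivity, fun a ha x hx => ?_⟩
    have hsub : Set.uIcc a x ⊆ Set.Icc m K := Set.uIcc_subset_Icc ha hx
    have hderiv : ∀ z ∈ Set.uIcc a x, HasDerivAt (fun z => z ^ β - rpowTaylor β a (n + 1) z)
        (β * (z ^ (β - 1) - rpowTaylor (β - 1) a n z)) z := fun z hz =>
      ((Real.hasDerivAt_rpow_const (Or.inl (hm.trans_le (hsub hz).1).ne')).sub
        (hasDerivAt_rpowTaylor_succ β a z n)).congr_deriv (by ring)
    have hbound : ∀ z ∈ Set.uIcc a x, |β * (z ^ (β - 1) - rpowTaylor (β - 1) a n z)|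
        ≤ |β| * C * |z - a| ^ n := fun z hz => by
      rw [abs_mul, mul_assoc]
      exact mul_le_mul_of_nonneg_left (hCb a ha z (hsub hz)) (abs_nonneg β)
    simpa [rpowTaylor_succ_self] using abs_sub_le_mul_abs_sub_pow_succ (by positivity) hderiv hbound

section Compositions

variable {R : Type*}

/-- The coefficient of `z ^ k` in `(∑_{j ≥ 1} ε j * z ^ j) ^ m`. -/
def compositionSum [CommSemiring R] (ε : ℕ → R) (m k : ℕ) : R :=
  ∑ i ∈ (Finset.Nat.antidiagonalTuple m k).filter (fun i => ∀ j, 0 < i j), ∏ j, ε (i j)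

lemma compositionSum_eq_zero_of_lt [CommSemiring R] (ε : ℕ → R) {m k : ℕ} (h : k < m) :
    compositionSum ε m k = 0 := by
  refine sum_eq_zero fun i hi => absurd h (not_lt.2 ?_)
  rw [mem_filter, Finset.Nat.mem_antidiagonalTuple] at hi
  calc m = ∑ _j : Fin m, 1 := by simp
    _ ≤ ∑ j, i j := sum_le_sum fun j _ => hi.2 j
    _ = k := hi.1

lemma sum_range_compositionSum [CommSemiring R] (ε : ℕ → R) (m n : ℕ) :
    ∑ k ∈ range (n + 1), compositionSum ε m k =
      ∑ g ∈ (Fintype.piFinset fun _ : Fin m => Icc 1 n) with ∑ j, g j ≤ n, ∏ j, ε (g j) := by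
  rw [← sum_fiberwise_of_maps_to (t := range (n + 1)) (g := fun g => ∑ j, g j)
    (s := (Fintype.piFinset fun _ : Fin m => Icc 1 n).filter fun g => ∑ j, g j ≤ n)
    (fun g hg => mem_range.2 (Nat.lt_succ_of_le (mem_filter.1 hg).2))]
  refine sum_congr rfl fun k hk => sum_congr ?_ fun _ _ => rfl
  ext g
  simp only [mem_filter, Fintype.mem_piFinset, mem_Icc, Finset.Nat.mem_antidiagonalTuple]
  constructor
  · rintro ⟨hsum, hpos⟩
    have hle : ∀ j, g j ≤ n := fun j =>
      (single_le_sum (fun j _ => Nat.zero_le (g j)) (mem_univ j)).trans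
        (hsum.le.trans (Nat.lt_succ_iff.1 (mem_range.1 hk)))
    exact ⟨⟨fun j => ⟨hpos j, hle j⟩, hsum ▸ Nat.lt_succ_iff.1 (mem_range.1 hk)⟩, hsum⟩
  · rintro ⟨⟨hmem, _⟩, hsum⟩
    exact ⟨hsum, fun j => (hmem j).1⟩

lemma sum_Icc_pow_sub_sum_range_compositionSum [CommRing R] (ε : ℕ → R) (m n : ℕ) :
    (∑ k ∈ Icc 1 n, ε k) ^ m - ∑ k ∈ range (n + 1), compositionSum ε m k =
      ∑ g ∈ (Fintype.piFinset fun _ : Fin m => Icc 1 n) with n < ∑ j, g j, ∏ j, ε (g j) := by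
  rw [sub_eq_iff_eq_add', sum_range_compositionSum, ← Fin.prod_const, prod_univ_sum]
  simp only [← not_le]
  exact (sum_filter_add_sum_filter_not _ _ _).symm

lemma sum_Icc_sum_Icc_compositionSum [CommSemiring R] (f ε : ℕ → R) (n : ℕ) :
    ∑ k ∈ Icc 1 n, ∑ m ∈ Icc 1 k, f m * compositionSum ε m k =
      ∑ m ∈ Icc 1 n, f m * ∑ k ∈ range (n + 1), compositionSum ε m k := by
  have hextend : ∀ k ∈ Icc 1 n, ∑ m ∈ Icc 1 k, f m * compositionSum ε m k =
      ∑ m ∈ Icc 1 n, f m * compositionSum ε m k := fun k hk =>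
    sum_subset (Icc_subset_Icc_right (mem_Icc.1 hk).2) fun m _ hm => by
      rw [compositionSum_eq_zero_of_lt ε (by simp_all), mul_zero]
  rw [sum_congr rfl hextend, sum_comm]
  refine sum_congr rfl fun m hm => ?_
  rw [sum_range_succ_eq_add_sum_Icc, compositionSum_eq_zero_of_lt ε (mem_Icc.1 hm).1, zero_add,
    mul_sum]

end Compositions

section Asymptotics

variable {ι : Type*} {l : Filter ι} {δ : ι → ℝ}

lemma isBigO_rpow_rpow_of_le (hδ : ∀ᶠ i in l, δ i ∈ Set.Icc 0 1) {p q : ℝ} (hp : 0 ≤ p)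
    (hpq : p ≤ q) : (fun i => δ i ^ q) =O[l] fun i => δ i ^ p :=
  IsBigO.of_bound' <| hδ.mono fun i hi => by
    rw [Real.norm_of_nonneg (Real.rpow_nonneg hi.1 _),
      Real.norm_of_nonneg (Real.rpow_nonneg hi.1 _)]
    exact Real.rpow_le_rpow_of_exponent_ge' hi.1 hi.2 hp hpq

lemma Asymptotics.IsBigO.pow_sub_pow {R : Type*} [SeminormedCommRing R] {f g : ι → R}
    {h : ι → ℝ} (hf : f =O[l] fun _ => (1 : ℝ)) (hg : g =O[l] fun _ => (1 : ℝ))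
    (hfg : (fun i => f i - g i) =O[l] h) (k : ℕ) :
    (fun i => f i ^ k - g i ^ k) =O[l] h := by
  induction k with
  | zero => simpa using isBigO_zero h l
  | succ k ih =>
    have h₁ : (fun i => f i * (f i ^ k - g i ^ k)) =O[l] h := by simpa using hf.mul ih
    have h₂ : (fun i => g i ^ k * (f i - g i)) =O[l] h := by simpa using (hg.pow k).mul hfg
    exact (h₁.add h₂).congr_left fun i => by ring

lemma isBigO_sum_Icc_pow_sub_sum_compositionSum (hδ : ∀ᶠ i in l, δ i ∈ Set.Icc 0 1)
    {ε : ℕ → ι → ℝ} {n : ℕ} (hε : ∀ k ∈ Icc 1 n, ε k =O[l] fun i => δ i ^ (((k : ℝ) + 2) / 2))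
    (m : ℕ) :
    (fun i => (∑ k ∈ Icc 1 n, ε k i) ^ m - ∑ k ∈ range (n + 1), compositionSum (ε · i) m k)
      =O[l] fun i => δ i ^ (((n : ℝ) + 3) / 2) := by
  simp_rw [sum_Icc_pow_sub_sum_range_compositionSum]
  refine IsBigO.fun_sum fun g hg => ?_
  obtain ⟨hg, hn⟩ := mem_filter.1 hg
  rw [Fintype.mem_piFinset] at hg
  have hm : 1 ≤ m := Nat.pos_of_ne_zero (by rintro rfl; simp at hn)
  have hprod : (fun i => ∏ j, δ i ^ (((g j : ℝ) + 2) / 2)) =ᶠ[l]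
      fun i => δ i ^ ∑ j, ((g j : ℝ) + 2) / 2 :=
    hδ.mono fun i hi => (Real.rpow_sum_of_nonneg hi.1 fun j _ => by positivity).symm
  have hexp : ((n : ℝ) + 3) / 2 ≤ ∑ j, ((g j : ℝ) + 2) / 2 := by
    have hsum : ((n : ℝ) + 1) ≤ ∑ j, (g j : ℝ) := by exact_mod_cast hn
    have hm' : (1 : ℝ) ≤ m := by exact_mod_cast hm
    rw [← sum_div, sum_add_distrib, sum_const, card_univ, Fintype.card_fin, nsmul_eq_mul]
    linarith
  exact (IsBigO.finsetProd fun j _ => hε (g j) (hg j)).trans <|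
    hprod.trans_isBigO (isBigO_rpow_rpow_of_le hδ (by positivity) hexp)

lemma isBigO_rpow_one {m K : ℝ} (hm : 0 < m) {a : ι → ℝ} (ha : ∀ᶠ i in l, a i ∈ Set.Icc m K)
    (β : ℝ) : (fun i => a i ^ β) =O[l] fun _ => (1 : ℝ) := by
  obtain ⟨C, -, hC⟩ := exists_abs_rpow_le hm K β
  exact IsBigO.of_bound C <| ha.mono fun i hi => by simpa using hC (a i) hi

lemma isBigO_rpow_sub_rpowTaylor {m K : ℝ} (hm : 0 < m) {a x : ι → ℝ}
    (ha : ∀ᶠ i in l, a i ∈ Set.Icc m K) (hx : ∀ᶠ i in l, x i ∈ Set.Icc m K) (β : ℝ) (n : ℕ) :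
    (fun i => x i ^ β - rpowTaylor β (a i) n (x i)) =O[l] fun i => (x i - a i) ^ n := by
  obtain ⟨C, -, hC⟩ := exists_abs_rpow_sub_rpowTaylor_le hm K n β
  exact IsBigO.of_bound C <| (ha.and hx).mono fun i hi => by
    simpa only [Real.norm_eq_abs, abs_pow] using hC (a i) hi.1 (x i) hi.2

theorem isBigO_rpow_sub_expansion {x : ι → ℝ} {ε : ℕ → ι → ℝ} {m K : ℝ} {n : ℕ} (η : ℝ)
    (hm : 0 < m) (hδ : ∀ᶠ i in l, δ i ∈ Set.Icc 0 1)
    (hx : ∀ᶠ i in l, x i ∈ Set.Icc m K) (ha : ∀ᶠ i in l, ε 0 i ∈ Set.Icc m K)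
    (hε : ∀ k ∈ Icc 1 n, ε k =O[l] fun i => δ i ^ (((k : ℝ) + 2) / 2))
    (happrox : (fun i => x i - ∑ k ∈ range (n + 1), ε k i)
      =O[l] fun i => δ i ^ (((n : ℝ) + 3) / 2)) :
    (fun i => x i ^ η - (ε 0 i ^ η + ∑ m' ∈ Icc 1 n, rpowTaylorCoeff η m' * ε 0 i ^ (η - m') *
        ∑ k ∈ range (n + 1), compositionSum (ε · i) m' k))
      =O[l] fun i => δ i ^ (((n : ℝ) + 3) / 2) := by
  set a := ε 0
  set E := fun i => ∑ k ∈ Icc 1 n, ε k i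
  have hn : (0 : ℝ) ≤ n := n.cast_nonneg
  have hDE : (fun i => (x i - a i) - E i) =O[l] fun i => δ i ^ (((n : ℝ) + 3) / 2) :=
    happrox.congr_left fun i => by rw [sum_range_succ_eq_add_sum_Icc]; ring
  have hE : E =O[l] fun i => δ i ^ ((3 : ℝ) / 2) :=
    IsBigO.fun_sum fun k hk => (hε k hk).trans <| isBigO_rpow_rpow_of_le hδ (by norm_num) <| by
      have : (1 : ℝ) ≤ k := by exact_mod_cast (mem_Icc.1 hk).1
      linarith
  have hD : (fun i => x i - a i) =O[l] fun i => δ i ^ ((3 : ℝ) / 2) :=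
    ((hDE.trans (isBigO_rpow_rpow_of_le hδ (by norm_num) (by linarith))).add hE).congr_left
      fun i => by ring
  have hone : (fun i => δ i ^ ((3 : ℝ) / 2)) =O[l] fun _ => (1 : ℝ) := by
    simpa using isBigO_rpow_rpow_of_le hδ le_rfl (by norm_num : (0 : ℝ) ≤ 3 / 2)
  have hDpow : (fun i => (x i - a i) ^ (n + 1)) =O[l] fun i => δ i ^ (((n : ℝ) + 3) / 2) := by
    have hpow : (fun i => (δ i ^ ((3 : ℝ) / 2)) ^ (n + 1)) =ᶠ[l]
        fun i => δ i ^ ((3 : ℝ) / 2 * (n + 1 : ℕ)) :=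
      hδ.mono fun i hi => (Real.rpow_mul_natCast hi.1 _ _).symm
    refine (hD.pow (n + 1)).trans <| hpow.trans_isBigO <|
      isBigO_rpow_rpow_of_le hδ (by positivity) ?_
    push_cast
    linarith
  have hterms := ((isBigO_rpow_sub_rpowTaylor hm ha hx η (n + 1)).trans hDpow).add <|
    IsBigO.fun_sum fun k (_ : k ∈ Icc 1 n) =>
      (((isBigO_rpow_one hm ha (η - k)).const_mul_left (rpowTaylorCoeff η k)).mul
        (((hD.trans hone).pow_sub_pow (hE.trans hone) hDE k).add
          (isBigO_sum_Icc_pow_sub_sum_compositionSum hδ hε k))).congr_right fun i => one_mul _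
  refine hterms.congr_left fun i => ?_
  simp only [rpowTaylor_succ, mul_add, mul_sub, sum_add_distrib, sum_sub_distrib]
  ring

end Asymptotics

theorem value_function_approximation_accuracy_general
    (γ η : ℝ) (n : ℕ) (T w m K : ℝ)
    (hm : 0 < m)
    (ψ : ℝ → ℝ → ℝ) (ψf : ℕ → ℝ → ℝ → ℝ)
    (hψbd : ∀ t ∈ Set.Icc (0:ℝ) T, ∀ y : ℝ, m ≤ ψ t y ∧ ψ t y ≤ K)
    (hψ0bd : ∀ t ∈ Set.Icc (0:ℝ) T, ∀ y : ℝ, m ≤ ψf 0 t y ∧ ψf 0 t y ≤ K)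
    (hψk : ∀ k : ℕ, 1 ≤ k → k ≤ n → ∀ t ∈ Set.Icc (0:ℝ) T, ∀ y : ℝ,
      |ψf k t y| ≤ K * (T - t) ^ (((k : ℝ) + 2) / 2))
    (hψapprox : ∀ t ∈ Set.Icc (0:ℝ) T, ∀ y : ℝ,
      |ψ t y - ∑ k ∈ Finset.range (n + 1), ψf k t y|
        ≤ K * (T - t) ^ (((n : ℝ) + 3) / 2))
    (V : ℝ → ℝ → ℝ)
    (hV : ∀ t y, V t y = w ^ (1 - γ) / (1 - γ) * ψ t y ^ η)
    (Vk : ℕ → ℝ → ℝ → ℝ)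
    (hV0 : ∀ t y, Vk 0 t y = w ^ (1 - γ) / (1 - γ) * ψf 0 t y ^ η)
    (hVk : ∀ k : ℕ, 1 ≤ k → ∀ t y, Vk k t y =
      w ^ (1 - γ) / (1 - γ) *
        ∑ m' ∈ Finset.Icc 1 k,
          (1 / (Nat.factorial m' : ℝ)) *
          (∏ j ∈ Finset.range m', (η - (j : ℝ))) *
          ψf 0 t y ^ (η - (m' : ℝ)) *
          ∑ i ∈ (Finset.Nat.antidiagonalTuple m' k).filter (fun i => ∀ j, 0 < i j),
            ∏ j, ψf (i j) t y) :
    ∃ C > (0:ℝ), ∀ t ∈ Set.Icc (max 0 (T - 1)) T, ∀ y : ℝ,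
      |V t y - ∑ k ∈ Finset.range (n + 1), Vk k t y|
        ≤ C * (T - t) ^ (((n : ℝ) + 3) / 2) := by
  set c := w ^ (1 - γ) / (1 - γ)
  set S : Set (ℝ × ℝ) := {p | p.1 ∈ Set.Icc (max 0 (T - 1)) T}
  have hS : ∀ p ∈ S, p.1 ∈ Set.Icc 0 T := fun p hp => ⟨(le_max_left _ _).trans hp.1, hp.2⟩
  have hδ : ∀ᶠ p in 𝓟 S, T - p.1 ∈ Set.Icc 0 1 := eventually_principal.2 fun p hp =>
    ⟨sub_nonneg.2 hp.2, by linarith [le_max_right 0 (T - 1), hp.1]⟩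
  have hbound {f : ℝ × ℝ → ℝ} {e : ℝ} (h : ∀ p ∈ S, |f p| ≤ K * (T - p.1) ^ e) :
      f =O[𝓟 S] fun p => (T - p.1) ^ e :=
    isBigO_principal.2 ⟨K, fun p hp => by
      rw [Real.norm_eq_abs, Real.norm_of_nonneg (Real.rpow_nonneg (sub_nonneg.2 hp.2) _)]
      exact h p hp⟩
  have hexp := isBigO_rpow_sub_expansion (x := fun p : ℝ × ℝ => ψ p.1 p.2)
    (ε := fun k (p : ℝ × ℝ) => ψf k p.1 p.2) (K := K) η hm hδ
    (eventually_principal.2 fun p hp => hψbd p.1 (hS p hp) p.2)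
    (eventually_principal.2 fun p hp => hψ0bd p.1 (hS p hp) p.2)
    (fun k hk => hbound fun p hp => hψk k (mem_Icc.1 hk).1 (mem_Icc.1 hk).2 p.1 (hS p hp) p.2)
    (hbound fun p hp => hψapprox p.1 (hS p hp) p.2)
  obtain ⟨C, hC, hCb⟩ := (hexp.const_mul_left c).exists_pos
  refine ⟨C, hC, fun t ht y => ?_⟩
  have hsum : ∑ k ∈ range (n + 1), Vk k t y = c * (ψf 0 t y ^ η + ∑ m' ∈ Icc 1 n,
      rpowTaylorCoeff η m' * ψf 0 t y ^ (η - m') *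
        ∑ k ∈ range (n + 1), compositionSum (ψf · t y) m' k) := by
    rw [sum_range_succ_eq_add_sum_Icc, hV0, sum_congr rfl fun k hk => hVk k (mem_Icc.1 hk).1 t y,
      ← mul_sum, mul_add, ← sum_Icc_sum_Icc_compositionSum]
    rfl
  have hdiff := isBigOWith_principal.1 hCb (t, y) ht
  rw [hV, hsum, ← mul_sub]
  simpa [Real.norm_of_nonneg (Real.rpow_nonneg (sub_nonneg.2 ht.2) _)] using hdiff

/-- Accuracy of the `n`-th order value function approximation under power utility and
pure stochastic volatility: if the approximation terms `ψ_k` of the linearized problem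
satisfy the stated bounds, then the induced expansion `V_k` of
`V = (w^{1-γ}/(1-γ)) ψ^η` is accurate to order `(T-t)^{(n+3)/2}` uniformly in `y`. -/
theorem value_function_approximation_accuracy
    (γ ρ η : ℝ) (n : ℕ) (T w m K : ℝ)
    (hγ : 1 < γ) (hρ : ρ ∈ Set.Ioo (-1 : ℝ) 1)
    (hη : η = γ / (γ + (1 - γ) * ρ^2))
    (hT : 0 < T) (hw : 0 < w) (hm : 0 < m) (hmK : m ≤ K)
    (ψ : ℝ → ℝ → ℝ) (ψf : ℕ → ℝ → ℝ → ℝ)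
    (hψ0indep : ∀ t y y' : ℝ, ψf 0 t y = ψf 0 t y')
    (hψbd : ∀ t ∈ Set.Icc (0:ℝ) T, ∀ y : ℝ, m ≤ ψ t y ∧ ψ t y ≤ K)
    (hψ0bd : ∀ t ∈ Set.Icc (0:ℝ) T, ∀ y : ℝ, m ≤ ψf 0 t y ∧ ψf 0 t y ≤ K)
    (hψk : ∀ k : ℕ, 1 ≤ k → k ≤ n → ∀ t ∈ Set.Icc (0:ℝ) T, ∀ y : ℝ,
      |ψf k t y| ≤ K * (T - t) ^ (((k : ℝ) + 2) / 2))
    (hψapprox : ∀ t ∈ Set.Icc (0:ℝ) T, ∀ y : ℝ,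
      |ψ t y - ∑ k ∈ Finset.range (n + 1), ψf k t y|
        ≤ K * (T - t) ^ (((n : ℝ) + 3) / 2))
    (V : ℝ → ℝ → ℝ)
    (hV : ∀ t y, V t y = w ^ (1 - γ) / (1 - γ) * ψ t y ^ η)
    (Vk : ℕ → ℝ → ℝ → ℝ)
    (hV0 : ∀ t y, Vk 0 t y = w ^ (1 - γ) / (1 - γ) * ψf 0 t y ^ η)
    (hVk : ∀ k : ℕ, 1 ≤ k → ∀ t y, Vk k t y =
      w ^ (1 - γ) / (1 - γ) *
        ∑ m' ∈ Finset.Icc 1 k,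
          (1 / (Nat.factorial m' : ℝ)) *
          (∏ j ∈ Finset.range m', (η - (j : ℝ))) *
          ψf 0 t y ^ (η - (m' : ℝ)) *
          ∑ i ∈ (Finset.Nat.antidiagonalTuple m' k).filter (fun i => ∀ j, 0 < i j),
            ∏ j, ψf (i j) t y) :
    ∃ C > (0:ℝ), ∀ t ∈ Set.Icc (max 0 (T - 1)) T, ∀ y : ℝ,
      |V t y - ∑ k ∈ Finset.range (n + 1), Vk k t y|
        ≤ C * (T - t) ^ (((n : ℝ) + 3) / 2) :=
  value_function_approximation_accuracy_general γ η n T w m K hm ψ ψf hψbd hψ0bd hψk hψapprox V hV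
    Vk hV0 hVk
end
end
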